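/- arXiv:2203.09422 — 2 statements merged into one kernel-verified Lean document; each statement's English description precedes it below -/
import Mathlib

section
/- If μ is a t-strongly log-concave probability measure on ℝⁿ (i.e., dμ = e^{-V}dx with ∇²V ≥ t·Id for some t > 0), then for every measurable set S with μ(S) > 0 and every r > 0, μ((S_r)^c) ≤ (1/μ(S))·exp(-t r²/4), where S_r = {x : d(x,S) ≤ r} is the Euclidean r-extension of S. -/
/-!
Prékopa–Leindler on `ℝ` follows from the one-dimensional Brunn–Minkowski inequality
`|A| + |B| ≤ 2 |(A + B) / 2|` applied to the level sets `{f > s}`, `{g > s}`, `{h > s}` after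
rescaling so that `sup f = sup g = 1`, and it tensorizes to `ℝⁿ` by Fubini.
A Hessian bound `∇²V ≥ t` makes `V` `t`-strongly convex, so
`V ((x + y) / 2) ≤ (V x + V y) / 2 - t ‖x - y‖² / 8`. For `x ∈ S` and `y ∉ S_r` this gives the
Prékopa–Leindler hypothesis for `f = 1_S e^{-V}`, `g = 1_{S_rᶜ} e^{-V}` and
`h = e^{-t r² / 8} e^{-V}`, whence `μ S * μ S_rᶜ ≤ e^{-t r² / 4}`.
-/

open MeasureTheory Set
open scoped ENNReal Pointwise

/-- The Prékopa–Leindler inequality with weight `1/2`, squared to avoid square roots: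
`√(f x * g y) ≤ h ((x + y) / 2)` for all `x, y` implies `√(∫ f * ∫ g) ≤ ∫ h`. -/
def IsPrekopaLeindler {E : Type*} [AddCommGroup E] [Module ℝ E] [MeasurableSpace E]
    (μ : Measure E) : Prop :=
  ∀ f g h : E → ℝ≥0∞, Measurable f → Measurable g → Measurable h →
    (∀ x y, f x * g y ≤ h (midpoint ℝ x y) ^ 2) →
    (∫⁻ x, f x ∂μ) * (∫⁻ x, g x ∂μ) ≤ (∫⁻ x, h x ∂μ) ^ 2

namespace IsPrekopaLeindler

variable {E F : Type*} [AddCommGroup E] [Module ℝ E] [MeasurableSpace E]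
  [AddCommGroup F] [Module ℝ F] [MeasurableSpace F] {μ : Measure E} {ν : Measure F}

theorem of_measurePreserving (H : IsPrekopaLeindler μ) (e : E ≃ᵐ F)
    (he : MeasurePreserving e μ ν) (he_mid : ∀ x y, e (midpoint ℝ x y) = midpoint ℝ (e x) (e y)) :
    IsPrekopaLeindler ν := by
  intro f g h hf hg hh hfgh
  rw [← he.lintegral_comp hf, ← he.lintegral_comp hg, ← he.lintegral_comp hh]
  refine H _ _ _ (hf.comp e.measurable) (hg.comp e.measurable) (hh.comp e.measurable) ?_
  intro x y
  simpa only [Function.comp_apply, he_mid] using hfgh (e x) (e y)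

theorem prod [SFinite μ] [SFinite ν] (hμ : IsPrekopaLeindler μ) (hν : IsPrekopaLeindler ν) :
    IsPrekopaLeindler (μ.prod ν) := by
  intro f g h hf hg hh hfgh
  rw [lintegral_prod _ hf.aemeasurable, lintegral_prod _ hg.aemeasurable,
    lintegral_prod _ hh.aemeasurable]
  refine hμ _ _ _ hf.lintegral_prod_right' hg.lintegral_prod_right' hh.lintegral_prod_right' ?_
  intro x y
  exact hν _ _ _ (hf.comp measurable_prodMk_left) (hg.comp measurable_prodMk_left)
    (hh.comp measurable_prodMk_left) fun b b' => hfgh (x, b) (y, b')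

theorem of_subsingleton [Subsingleton E] : IsPrekopaLeindler μ := by
  intro f g h _ _ _ hfgh
  have : Unique E := uniqueOfSubsingleton 0
  simp only [lintegral_unique, mul_pow]
  calc f default * μ univ * (g default * μ univ) = f default * g default * μ univ ^ 2 := by ring
    _ ≤ h default ^ 2 * μ univ ^ 2 := by
        gcongr; simpa [Subsingleton.elim (midpoint ℝ _ _) default] using hfgh default default

theorem withDensity_mul_withDensity_le (H : IsPrekopaLeindler μ) {ρ : E → ℝ≥0∞}
    (hρ : Measurable ρ) {A B : Set E} (hA : MeasurableSet A)
    (hB : MeasurableSet B) {K : ℝ≥0∞}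
    (hAB : ∀ x ∈ A, ∀ y ∈ B, ρ x * ρ y ≤ (K * ρ (midpoint ℝ x y)) ^ 2) :
    μ.withDensity ρ A * μ.withDensity ρ B ≤ (K * μ.withDensity ρ univ) ^ 2 := by
  have hPL := H (A.indicator ρ) (B.indicator ρ) (fun x => K * ρ x) (hρ.indicator hA)
    (hρ.indicator hB) (hρ.const_mul K) fun x y => by
      by_cases hx : x ∈ A
      · by_cases hy : y ∈ B
        · simpa [indicator_of_mem hx, indicator_of_mem hy] using hAB x hx y hy
        · simp [indicator_of_notMem hy]
      · simp [indicator_of_notMem hx]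
  rwa [lintegral_indicator hA, lintegral_indicator hB, lintegral_const_mul K hρ,
    ← withDensity_apply _ hA, ← withDensity_apply _ hB, ← setLIntegral_univ,
    ← withDensity_apply _ MeasurableSet.univ] at hPL

end IsPrekopaLeindler

theorem lintegral_eq_setLIntegral_Ioo_meas_lt {α : Type*} [MeasurableSpace α]
    (μ : Measure α) {u : α → ℝ≥0∞} (hu : Measurable u) (hu₁ : ∀ x, u x ≤ 1) :
    ∫⁻ x, u x ∂μ = ∫⁻ s in Ioo 0 1, μ {x | ENNReal.ofReal s < u x} := by
  have hu_top : ∀ x, u x ≠ ∞ := fun x => ne_top_of_le_ne_top ENNReal.one_ne_top (hu₁ x)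
  have hlevel : ∀ s, 0 < s → {x | s < (u x).toReal} = {x | ENNReal.ofReal s < u x} := fun s hs =>
    by ext x; exact (ENNReal.ofReal_lt_iff_lt_toReal hs.le (hu_top x)).symm
  calc ∫⁻ x, u x ∂μ = ∫⁻ x, ENNReal.ofReal (u x).toReal ∂μ := by
        simp only [ENNReal.ofReal_toReal (hu_top _)]
    _ = ∫⁻ s in Ioi 0, μ {x | s < (u x).toReal} :=
        lintegral_eq_lintegral_meas_lt μ (ae_of_all _ fun _ => ENNReal.toReal_nonneg)
          hu.ennreal_toReal.aemeasurable
    _ = ∫⁻ s in Ioi 0, (Ioo 0 1).indicator (fun s => μ {x | ENNReal.ofReal s < u x}) s := by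
        refine setLIntegral_congr_fun measurableSet_Ioi fun s (hs : 0 < s) => ?_
        rcases lt_or_ge s 1 with hs₁ | hs₁
        · rw [indicator_of_mem (show s ∈ Ioo 0 1 from ⟨hs, hs₁⟩), hlevel s hs]
        · have hempty : {x | s < (u x).toReal} = ∅ := eq_empty_of_forall_notMem fun x hx =>
            (hx.trans_le (ENNReal.toReal_le_of_le_ofReal zero_le_one
              (by simpa using hu₁ x))).not_ge hs₁
          rw [indicator_of_notMem fun hs' : s ∈ Ioo 0 1 => hs'.2.not_ge hs₁, hempty, measure_empty]
    _ = ∫⁻ s in Ioo 0 1, μ {x | ENNReal.ofReal s < u x} := by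
        rw [lintegral_indicator measurableSet_Ioo, Measure.restrict_restrict measurableSet_Ioo,
          inter_eq_left.2 Ioo_subset_Ioi_self]

theorem lintegral_eq_iSup_lintegral_min_natCast {α : Type*} [MeasurableSpace α] (μ : Measure α)
    {u : α → ℝ≥0∞} (hu : Measurable u) :
    ∫⁻ x, u x ∂μ = ⨆ k : ℕ, ∫⁻ x, min (u x) k ∂μ := by
  rw [← lintegral_iSup (fun k => hu.min measurable_const)
    fun j k hjk x => min_le_min_left _ (Nat.cast_le.2 hjk)]
  simp only [← inf_iSup_eq, ENNReal.iSup_natCast, inf_top_eq]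

namespace ENNReal

-- The root `four_mul_le_sq_add` needs `MulPosStrictMono`, which fails at `∞`.
theorem four_mul_le_sq_add (x y : ℝ≥0∞) : 4 * x * y ≤ (x + y) ^ 2 := by
  wlog hxy : x ≤ y generalizing x y
  · rw [mul_right_comm, add_comm]
    exact this y x (le_of_not_ge hxy)
  obtain ⟨d, rfl⟩ := exists_add_of_le hxy
  calc 4 * x * (x + d) ≤ 4 * x * (x + d) + d * d := le_self_add
    _ = (x + (x + d)) ^ 2 := by ring

theorem mul_le_sq_of_inv_mul_add_inv_mul_le {a b c F G H : ℝ≥0∞} (hc : c ^ 2 = a * b)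
    (ha₀ : a ≠ 0) (ha : a ≠ ∞) (hb₀ : b ≠ 0) (hb : b ≠ ∞)
    (hFGH : a⁻¹ * F + b⁻¹ * G ≤ 2 * (c⁻¹ * H)) : F * G ≤ H ^ 2 := by
  have hab₀ : a * b ≠ 0 := mul_ne_zero ha₀ hb₀
  have hab : a * b ≠ ∞ := mul_ne_top ha hb
  have hamgm : 4 * (a⁻¹ * F * (b⁻¹ * G)) ≤ 4 * (c⁻¹ * H) ^ 2 := calc
    4 * (a⁻¹ * F * (b⁻¹ * G)) ≤ (a⁻¹ * F + b⁻¹ * G) ^ 2 := by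
      rw [← mul_assoc]; exact four_mul_le_sq_add _ _
    _ ≤ (2 * (c⁻¹ * H)) ^ 2 := by gcongr
    _ = 4 * (c⁻¹ * H) ^ 2 := by ring
  calc F * G = a * b * (a⁻¹ * F * (b⁻¹ * G)) := by
        rw [show a⁻¹ * F * (b⁻¹ * G) = (a * b)⁻¹ * (F * G) by
          rw [ENNReal.mul_inv (.inl ha₀) (.inl ha)]; ring, ← mul_assoc,
          ENNReal.mul_inv_cancel hab₀ hab, one_mul]
    _ ≤ a * b * (c⁻¹ * H) ^ 2 := by
        gcongr; exact (ENNReal.mul_le_mul_iff_right four_ne_zero ofNat_ne_top).1 hamgm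
    _ = H ^ 2 := by
        rw [mul_pow, ← ENNReal.inv_pow, hc, ← mul_assoc, ENNReal.mul_inv_cancel hab₀ hab, one_mul]

end ENNReal

namespace Real

/-- The translates `max K + L` and `min L + K` lie in `K + L` and meet only at `max K + min L`. -/
theorem volume_add_volume_le_volume_add {K L : Set ℝ} (hK : IsCompact K) (hL : IsCompact L)
    (hK₀ : K.Nonempty) (hL₀ : L.Nonempty) :
    volume K + volume L ≤ volume (K + L) := by
  obtain ⟨a, haK, ha⟩ := hK.exists_isGreatest hK₀
  obtain ⟨b, hbL, hb⟩ := hL.exists_isLeast hL₀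
  have hX : a +ᵥ L ⊆ K + L := by
    rintro - ⟨y, hy, rfl⟩
    exact add_mem_add haK hy
  have hY : b +ᵥ K ⊆ K + L := by
    rintro - ⟨x, hx, rfl⟩
    change b + x ∈ K + L
    exact add_comm x b ▸ add_mem_add hx hbL
  have hXY : (b +ᵥ K) ∩ (a +ᵥ L) ⊆ {a + b} := by
    rintro - ⟨⟨x, hx, rfl⟩, ⟨y, hy, hyx⟩⟩
    change a + y = b + x at hyx
    change b + x = a + b
    linarith [ha hx, hb hy]
  calc volume K + volume L = volume (b +ᵥ K) + volume (a +ᵥ L) := by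
        rw [measure_vadd, measure_vadd]
    _ = volume ((b +ᵥ K) ∪ (a +ᵥ L)) + volume ((b +ᵥ K) ∩ (a +ᵥ L)) :=
        (measure_union_add_inter _ (hL.vadd a).measurableSet).symm
    _ ≤ volume (K + L) + volume ({a + b} : Set ℝ) :=
        add_le_add (measure_mono (union_subset hY hX)) (measure_mono hXY)
    _ = volume (K + L) := by rw [measure_singleton, add_zero]

theorem volume_add_volume_le_two_mul_volume_of_isCompact {K L C : Set ℝ} (hK : IsCompact K)
    (hL : IsCompact L) (hK₀ : K.Nonempty) (hL₀ : L.Nonempty)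
    (hC : ∀ x ∈ K, ∀ y ∈ L, midpoint ℝ x y ∈ C) :
    volume K + volume L ≤ 2 * volume C := by
  have hsub : (2 : ℝ)⁻¹ • (K + L) ⊆ C := by
    rintro - ⟨-, ⟨x, hx, y, hy, rfl⟩, rfl⟩
    simpa [midpoint_eq_smul_add] using hC x hx y hy
  calc volume K + volume L ≤ volume (K + L) := volume_add_volume_le_volume_add hK hL hK₀ hL₀
    _ = 2 * volume ((2 : ℝ)⁻¹ • (K + L)) := by
        rw [Measure.addHaar_smul, Module.finrank_self, pow_one, ← mul_assoc,
          abs_of_pos (by norm_num), ENNReal.ofReal_inv_of_pos two_pos, ENNReal.ofReal_ofNat,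
          ENNReal.mul_inv_cancel two_ne_zero ENNReal.ofNat_ne_top, one_mul]
    _ ≤ 2 * volume C := by gcongr

theorem volume_add_volume_le_two_mul_volume {A B C : Set ℝ} (hA : MeasurableSet A)
    (hB : MeasurableSet B) (hA₀ : A.Nonempty) (hB₀ : B.Nonempty)
    (hC : ∀ x ∈ A, ∀ y ∈ B, midpoint ℝ x y ∈ C) :
    volume A + volume B ≤ 2 * volume C := by
  obtain ⟨a, ha⟩ := hA₀
  obtain ⟨b, hb⟩ := hB₀
  rw [hA.measure_eq_iSup_isCompact, hB.measure_eq_iSup_isCompact]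
  simp only [iSup_and']
  refine ENNReal.biSup_add_biSup_le' ⟨{a}, by simpa using ha, isCompact_singleton⟩
    ⟨{b}, by simpa using hb, isCompact_singleton⟩ ?_
  rintro K ⟨hKA, hK⟩ L ⟨hLB, hL⟩
  -- adding a point makes the compact sets nonempty without shrinking them
  calc volume K + volume L ≤ volume (insert a K) + volume (insert b L) := by
        gcongr <;> exact subset_insert _ _
    _ ≤ 2 * volume C :=
        volume_add_volume_le_two_mul_volume_of_isCompact (hK.insert a) (hL.insert b)
          (insert_nonempty a K) (insert_nonempty b L) fun x hx y hy =>
            hC x (insert_subset ha hKA hx) y (insert_subset hb hLB hy)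

theorem lintegral_add_lintegral_le_two_mul_of_iSup_eq_one {f g h : ℝ → ℝ≥0∞} (hf : Measurable f)
    (hg : Measurable g) (hh : Measurable h) (hf₁ : ⨆ x, f x = 1) (hg₁ : ⨆ x, g x = 1)
    (hfgh : ∀ x y, f x * g y ≤ h (midpoint ℝ x y) ^ 2) :
    (∫⁻ x, f x) + ∫⁻ x, g x ≤ 2 * ∫⁻ x, h x := by
  have hf_le : ∀ x, f x ≤ 1 := fun x => hf₁ ▸ le_iSup f x
  have hg_le : ∀ x, g x ≤ 1 := fun x => hg₁ ▸ le_iSup g x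
  have hlevel_meas : ∀ u : ℝ → ℝ≥0∞, Measurable fun s : ℝ => volume {x | ENNReal.ofReal s < u x} :=
    fun u => Antitone.measurable fun s s' hss' =>
      measure_mono fun x hx => (ENNReal.ofReal_le_ofReal hss').trans_lt hx
  calc (∫⁻ x, f x) + ∫⁻ x, g x
      = ∫⁻ s in Ioo 0 1, (volume {x | ENNReal.ofReal s < f x}
          + volume {x | ENNReal.ofReal s < g x}) := by
        rw [lintegral_eq_setLIntegral_Ioo_meas_lt _ hf hf_le,
          lintegral_eq_setLIntegral_Ioo_meas_lt _ hg hg_le,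
          lintegral_add_left (hlevel_meas f)]
    _ ≤ ∫⁻ s in Ioo 0 1, 2 * volume {x | ENNReal.ofReal s < min (h x) 1} := by
        refine setLIntegral_mono' measurableSet_Ioo fun s hs => ?_
        have hs₁ : ENNReal.ofReal s < 1 := ENNReal.ofReal_lt_one.2 hs.2
        obtain ⟨a, ha⟩ := lt_iSup_iff.1 (hf₁ ▸ hs₁)
        obtain ⟨b, hb⟩ := lt_iSup_iff.1 (hg₁ ▸ hs₁)
        refine volume_add_volume_le_two_mul_volume (measurableSet_lt measurable_const hf)
          (measurableSet_lt measurable_const hg) ⟨a, ha⟩ ⟨b, hb⟩ fun x hx y hy => lt_min ?_ hs₁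
        -- otherwise `h (midpoint ℝ x y) ^ 2 ≤ s ^ 2 < f x * g y`
        by_contra! hle
        have hsq := (hfgh x y).trans (pow_le_pow_left' hle 2)
        exact (ENNReal.mul_lt_mul hx hy).not_ge (by simpa only [sq] using hsq)
    _ = 2 * ∫⁻ x, min (h x) 1 := by
        rw [lintegral_const_mul _ (hlevel_meas _),
          lintegral_eq_setLIntegral_Ioo_meas_lt _ (hh.min measurable_const)
            fun x => min_le_right _ _]
    _ ≤ 2 * ∫⁻ x, h x := by gcongr with x; exact min_le_left _ _

theorem lintegral_mul_lintegral_le_sq_of_iSup_ne_top {f g h : ℝ → ℝ≥0∞} (hf : Measurable f)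
    (hg : Measurable g) (hh : Measurable h) (hf_top : ⨆ x, f x ≠ ∞) (hg_top : ⨆ x, g x ≠ ∞)
    (hfgh : ∀ x y, f x * g y ≤ h (midpoint ℝ x y) ^ 2) :
    (∫⁻ x, f x) * ∫⁻ x, g x ≤ (∫⁻ x, h x) ^ 2 := by
  set a := ⨆ x, f x
  set b := ⨆ x, g x
  rcases eq_or_ne a 0 with ha₀ | ha₀
  · simp [show f = 0 from funext (ENNReal.iSup_eq_zero.1 ha₀)]
  rcases eq_or_ne b 0 with hb₀ | hb₀
  · simp [show g = 0 from funext (ENNReal.iSup_eq_zero.1 hb₀)]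
  set c := (a * b) ^ (2⁻¹ : ℝ)
  have hc : c ^ 2 = a * b := by simpa using ENNReal.rpow_inv_natCast_pow two_ne_zero (a * b)
  refine ENNReal.mul_le_sq_of_inv_mul_add_inv_mul_le hc ha₀ hf_top hb₀ hg_top ?_
  rw [← lintegral_const_mul _ hf, ← lintegral_const_mul _ hg, ← lintegral_const_mul _ hh]
  refine lintegral_add_lintegral_le_two_mul_of_iSup_eq_one (hf.const_mul _) (hg.const_mul _)
    (hh.const_mul _)
    (by rw [← ENNReal.mul_iSup, ENNReal.inv_mul_cancel ha₀ hf_top])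
    (by rw [← ENNReal.mul_iSup, ENNReal.inv_mul_cancel hb₀ hg_top]) fun x y => ?_
  calc a⁻¹ * f x * (b⁻¹ * g y) = (c ^ 2)⁻¹ * (f x * g y) := by
        rw [hc, ENNReal.mul_inv (.inl ha₀) (.inl hf_top)]; ring
    _ ≤ (c ^ 2)⁻¹ * h (midpoint ℝ x y) ^ 2 := by gcongr; exact hfgh x y
    _ = (c⁻¹ * h (midpoint ℝ x y)) ^ 2 := by rw [mul_pow, ENNReal.inv_pow]

theorem isPrekopaLeindler_volume : IsPrekopaLeindler (volume : Measure ℝ) := by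
  intro f g h hf hg hh hfgh
  have hmin_top : ∀ (u : ℝ → ℝ≥0∞) (k : ℕ), ⨆ x, min (u x) k ≠ ∞ := fun u k =>
    ne_top_of_le_ne_top (ENNReal.natCast_ne_top k) (iSup_le fun x => min_le_right _ _)
  have hmono : ∀ (u : ℝ → ℝ≥0∞), Monotone fun k : ℕ => ∫⁻ x, min (u x) k := fun u j k hjk =>
    lintegral_mono fun x => min_le_min_left _ (Nat.cast_le.2 hjk)
  rw [lintegral_eq_iSup_lintegral_min_natCast _ hf, lintegral_eq_iSup_lintegral_min_natCast _ hg,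
    ENNReal.iSup_mul]
  refine iSup_le fun j => ?_
  rw [ENNReal.mul_iSup]
  refine iSup_le fun k => ?_
  calc (∫⁻ x, min (f x) j) * ∫⁻ x, min (g x) k
      ≤ (∫⁻ x, min (f x) (max j k : ℕ)) * ∫⁻ x, min (g x) (max j k : ℕ) :=
        mul_le_mul' (hmono f (le_max_left j k)) (hmono g (le_max_right j k))
    _ ≤ (∫⁻ x, h x) ^ 2 :=
        lintegral_mul_lintegral_le_sq_of_iSup_ne_top (hf.min measurable_const)
          (hg.min measurable_const) hh (hmin_top f _) (hmin_top g _)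
          fun x y => (mul_le_mul' (min_le_left _ _) (min_le_left _ _)).trans (hfgh x y)

end Real

theorem isPrekopaLeindler_volume_pi_fin (n : ℕ) :
    IsPrekopaLeindler (volume : Measure (Fin n → ℝ)) := by
  induction n with
  | zero => exact .of_subsingleton
  | succ n ih =>
    refine (Real.isPrekopaLeindler_volume.prod ih).of_measurePreserving
      (MeasurableEquiv.piFinSuccAbove (fun _ => ℝ) 0).symm
      (volume_preserving_piFinSuccAbove (fun _ => ℝ) 0).symm fun p q => ?_
    ext i
    induction i using Fin.cases <;> simp [MeasurableEquiv.piFinSuccAbove_symm_apply] <;> rfl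

theorem isPrekopaLeindler_volume_pi (ι : Type*) [Fintype ι] :
    IsPrekopaLeindler (volume : Measure (ι → ℝ)) :=
  (isPrekopaLeindler_volume_pi_fin _).of_measurePreserving
    (MeasurableEquiv.piCongrLeft (fun _ => ℝ) (Fintype.equivFin ι).symm)
    (volume_measurePreserving_piCongrLeft (fun _ => ℝ) (Fintype.equivFin ι).symm) fun x y => by
      ext i; simp [MeasurableEquiv.piCongrLeft, Equiv.piCongrLeft_apply_eq_cast]

theorem EuclideanSpace.isPrekopaLeindler_volume (ι : Type*) [Fintype ι] :
    IsPrekopaLeindler (volume : Measure (EuclideanSpace ℝ ι)) :=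
  (isPrekopaLeindler_volume_pi ι).of_measurePreserving (MeasurableEquiv.toLp 2 (ι → ℝ))
    (EuclideanSpace.volume_preserving_symm_measurableEquiv_toLp ι).symm fun _ _ => rfl

theorem strongConvexOn_univ_of_hasDerivAt {φ φ' φ'' : ℝ → ℝ} {m : ℝ}
    (hφ : ∀ s, HasDerivAt φ (φ' s) s) (hφ' : ∀ s, HasDerivAt φ' (φ'' s) s)
    (hm : ∀ s, m ≤ φ'' s) : StrongConvexOn univ m φ := by
  rw [strongConvexOn_iff_convex]
  simp only [Real.norm_eq_abs, sq_abs]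
  have hsq : ∀ s : ℝ, HasDerivAt (fun s => m / 2 * s ^ 2) (m * s) s := fun s => by
    simpa using ((hasDerivAt_pow 2 s).const_mul (m / 2)).congr_deriv (by ring)
  refine convexOn_of_hasDerivWithinAt2_nonneg convex_univ (f' := fun s => φ' s - m * s)
    (f'' := fun s => φ'' s - m)
    (fun s _ => ((hφ s).sub (hsq s)).continuousAt.continuousWithinAt)
    (fun s _ => ((hφ s).sub (hsq s)).hasDerivWithinAt) (fun s _ => ?_)
    fun s _ => sub_nonneg.2 (hm s)
  have hψ'' : HasDerivAt (fun s => φ' s - m * s) (φ'' s - m) s :=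
    ((hφ' s).sub ((hasDerivAt_id s).const_mul m)).congr_deriv (by rw [mul_one])
  exact hψ''.hasDerivWithinAt

theorem strongConvexOn_univ_of_le_iteratedFDeriv_two {E : Type*} [NormedAddCommGroup E]
    [NormedSpace ℝ E] {V : E → ℝ} (hV : ContDiff ℝ 2 V) {m : ℝ}
    (hm : ∀ x u, m * ‖u‖ ^ 2 ≤ iteratedFDeriv ℝ 2 V x ![u, u]) : StrongConvexOn univ m V := by
  refine ⟨convex_univ, fun x _ y _ a b ha hb hab => ?_⟩
  set d := y - x
  have hline : ∀ s : ℝ, HasDerivAt (fun s : ℝ => x + s • d) d s := fun s => by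
    simpa using ((hasDerivAt_id s).smul_const d).const_add x
  have hV' : ∀ z, HasFDerivAt V (fderiv ℝ V z) z :=
    fun z => (hV.differentiable two_ne_zero z).hasFDerivAt
  have hV'' : ∀ z, HasFDerivAt (fderiv ℝ V) (fderiv ℝ (fderiv ℝ V) z) z :=
    fun z => ((hV.fderiv_right (by norm_num)).differentiable one_ne_zero z).hasFDerivAt
  have hφ := strongConvexOn_univ_of_hasDerivAt (m := m * ‖d‖ ^ 2)
    (fun s => (hV' _).comp_hasDerivAt s (hline s))
    (fun s => ((hV'' _).comp_hasDerivAt s (hline s)).clm_apply (hasDerivAt_const s d))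
    fun s => by simpa [iteratedFDeriv_two_apply] using hm (x + s • d) d
  have key := hφ.2 (mem_univ 0) (mem_univ 1) ha hb hab
  obtain rfl : a = 1 - b := by linarith
  simp only [Function.comp_apply, smul_eq_mul, mul_zero, zero_add, mul_one, zero_smul, add_zero,
    one_smul, zero_sub, norm_neg, norm_one, one_pow] at key
  rw [show x + b • d = (1 - b) • x + b • y by simp only [d]; module, add_sub_cancel] at key
  simp only [smul_eq_mul, norm_sub_rev x y]
  linarith

theorem StrongConvexOn.midpoint_le {E : Type*} [NormedAddCommGroup E] [NormedSpace ℝ E]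
    {V : E → ℝ} {m : ℝ} (hV : StrongConvexOn univ m V) (x y : E) :
    V (midpoint ℝ x y) ≤ (V x + V y) / 2 - m / 8 * ‖x - y‖ ^ 2 := by
  have := hV.2 (mem_univ x) (mem_univ y) (show (0 : ℝ) ≤ 2⁻¹ by norm_num)
    (show (0 : ℝ) ≤ 2⁻¹ by norm_num) (by norm_num)
  rw [← smul_add] at this
  rw [midpoint_eq_smul_add, invOf_eq_inv]
  simp only [smul_eq_mul] at this
  linarith

theorem ENNReal.ofReal_exp_neg_mul_ofReal_exp_neg_le_sq {a b c d : ℝ} (h : d ≤ (a + b) / 2 - c) :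
    ENNReal.ofReal (Real.exp (-a)) * ENNReal.ofReal (Real.exp (-b)) ≤
      (ENNReal.ofReal (Real.exp (-c)) * ENNReal.ofReal (Real.exp (-d))) ^ 2 := by
  rw [← ENNReal.ofReal_mul (Real.exp_nonneg _), ← ENNReal.ofReal_mul (Real.exp_nonneg _),
    ← ENNReal.ofReal_pow (by positivity), ← Real.exp_add, ← Real.exp_add, ← Real.exp_nat_mul]
  gcongr
  push_cast
  linarith

theorem strongly_logconcave_concentration_general (n : ℕ)
    (V : EuclideanSpace ℝ (Fin n) → ℝ) (hV : ContDiff ℝ 2 V)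
    (t : ℝ) (ht : 0 < t)
    (hhess : ∀ x u : EuclideanSpace ℝ (Fin n),
      t * ‖u‖ ^ 2 ≤ iteratedFDeriv ℝ 2 V x ![u, u])
    (μ : Measure (EuclideanSpace ℝ (Fin n)))
    (hμ : μ = volume.withDensity fun x => ENNReal.ofReal (Real.exp (-V x)))
    [IsProbabilityMeasure μ]
    (S : Set (EuclideanSpace ℝ (Fin n))) (hS : MeasurableSet S) (hSpos : 0 < μ S)
    (r : ℝ) (hr : 0 < r) :
    μ (Metric.cthickening r S)ᶜ ≤ (μ S)⁻¹ * ENNReal.ofReal (Real.exp (-(t * r ^ 2) / 4)) := by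
  have hconv := strongConvexOn_univ_of_le_iteratedFDeriv_two hV hhess
  have hρ : Measurable fun x => ENNReal.ofReal (Real.exp (-V x)) :=
    (hV.continuous.neg.rexp).measurable.ennreal_ofReal
  have hPL := (EuclideanSpace.isPrekopaLeindler_volume (Fin n)).withDensity_mul_withDensity_le hρ
    hS Metric.isClosed_cthickening.measurableSet.compl
    (K := ENNReal.ofReal (Real.exp (-(t * r ^ 2 / 8))))
    fun x hx y hy => by
      have hxy : r ≤ ‖x - y‖ := by
        rw [← dist_eq_norm, dist_comm]
        by_contra! h
        exact hy (Metric.mem_cthickening_of_dist_le y x r S hx h.le)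
      have hr_le : t / 8 * r ^ 2 ≤ t / 8 * ‖x - y‖ ^ 2 := by gcongr
      refine ENNReal.ofReal_exp_neg_mul_ofReal_exp_neg_le_sq ?_
      linarith [hconv.midpoint_le x y]
  rw [← hμ, measure_univ, mul_one, ← ENNReal.ofReal_pow (Real.exp_nonneg _),
    ← Real.exp_nat_mul] at hPL
  calc μ (Metric.cthickening r S)ᶜ = (μ S)⁻¹ * (μ S * μ (Metric.cthickening r S)ᶜ) :=
        (ENNReal.inv_mul_cancel_left hSpos.ne' (measure_ne_top _ _)).symm
    _ ≤ (μ S)⁻¹ * ENNReal.ofReal (Real.exp (-(t * r ^ 2) / 4)) := by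
        convert mul_le_mul_right hPL _ using 4
        push_cast
        ring

/-- If `μ = e^{-V} dx` is a `t`-strongly log-concave probability measure on `ℝⁿ`
(`∇²V ≥ t·Id`), then for every measurable `S` with `μ S > 0` and every `r > 0`,
`μ((S_r)ᶜ) ≤ (1/μ(S)) exp(-t r²/4)`, where `S_r` is the Euclidean `r`-extension of `S`. -/
theorem strongly_logconcave_concentration (n : ℕ)
    (V : EuclideanSpace ℝ (Fin n) → ℝ) (hV : ContDiff ℝ 2 V)
    (hVconv : ConvexOn ℝ Set.univ V)
    (t : ℝ) (ht : 0 < t)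
    (hhess : ∀ x u : EuclideanSpace ℝ (Fin n),
      t * ‖u‖ ^ 2 ≤ iteratedFDeriv ℝ 2 V x ![u, u])
    (μ : Measure (EuclideanSpace ℝ (Fin n)))
    (hμ : μ = volume.withDensity fun x => ENNReal.ofReal (Real.exp (-V x)))
    [IsProbabilityMeasure μ]
    (S : Set (EuclideanSpace ℝ (Fin n))) (hS : MeasurableSet S) (hSpos : 0 < μ S)
    (r : ℝ) (hr : 0 < r) :
    μ (Metric.cthickening r S)ᶜ ≤ (μ S)⁻¹ * ENNReal.ofReal (Real.exp (-(t * r ^ 2) / 4)) :=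
  strongly_logconcave_concentration_general n V hV t ht hhess μ hμ S hS hSpos r hr
end

section
/- If a probability measure μ on ℝⁿ satisfies a Poincaré inequality with constant c_P (i.e., Var_μ(f) ≤ c_P² E_μ(|∇f|²) for all locally Lipschitz f), then its concentration function satisfies α_μ(r) ≤ exp(-r/(3 c_P)) for all r > 0. -/
open MeasureTheory ProbabilityTheory Metric

/-!
Apply the Poincaré inequality to the distance to a set `A` with `μ A ≥ 1/2`, truncated at
`h = 2 c_P`. This function vanishes on `A`, equals `h` outside the `h`-neighbourhood `A_h`, and
is `1`-Lipschitz with gradient supported in `A_h \ A`; the inequality then reads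
`2 c_P² μ(A_hᶜ) ≤ c_P² (μ(Aᶜ) - μ(A_hᶜ))`, i.e. `μ(A_hᶜ) ≤ μ(Aᶜ)/3`. Iterating from a set of
measure `1/2` gives `μ(S_{2 k c_P}ᶜ) ≤ 3^{-k}/2`, and `3^{-k}/2 ≤ e^{-2(k+1)/3}` since `e^{2/3} < 2`.
-/

def SatisfiesPoincareInequality {E : Type*} [NormedAddCommGroup E] [NormedSpace ℝ E]
    [MeasurableSpace E] (μ : Measure E) (c : ℝ) : Prop :=
  ∀ f : E → ℝ, LocallyLipschitz f → variance f μ ≤ c ^ 2 * ∫ x, ‖fderiv ℝ f x‖ ^ 2 ∂μ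

lemma measureReal_mul_sq_add_le_variance {Ω : Type*} [MeasurableSpace Ω] {μ : Measure Ω}
    [IsFiniteMeasure μ] {f : Ω → ℝ} (hf : MemLp f 2 μ) {A B : Set Ω} (hA : MeasurableSet A)
    (hB : MeasurableSet B) (hAB : Disjoint A B) {u v : ℝ} (hfA : ∀ x ∈ A, f x = u)
    (hfB : ∀ x ∈ B, f x = v) :
    μ.real A * (u - μ[f]) ^ 2 + μ.real B * (v - μ[f]) ^ 2 ≤ variance f μ := by
  set m := μ[f]
  have hint : Integrable (fun x => (f x - m) ^ 2) μ := (hf.sub (memLp_const m)).integrable_sq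
  have hsetA : ∫ x in A, (f x - m) ^ 2 ∂μ = μ.real A * (u - m) ^ 2 := by
    rw [setIntegral_congr_fun hA fun x hx => by rw [hfA x hx], setIntegral_const, smul_eq_mul]
  have hsetB : ∫ x in B, (f x - m) ^ 2 ∂μ = μ.real B * (v - m) ^ 2 := by
    rw [setIntegral_congr_fun hB fun x hx => by rw [hfB x hx], setIntegral_const, smul_eq_mul]
  rw [variance_eq_integral hf.aemeasurable, ← hsetA, ← hsetB,
    ← setIntegral_union hAB hB hint.integrableOn hint.integrableOn]
  exact setIntegral_le_integral hint (.of_forall fun x => sq_nonneg _)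

lemma integral_norm_fderiv_sq_le {E : Type*} [NormedAddCommGroup E] [NormedSpace ℝ E]
    [MeasurableSpace E] {μ : Measure E} [IsFiniteMeasure μ] {f : E → ℝ} {K : NNReal}
    (hf : LipschitzWith K f) {D : Set E} (hD : MeasurableSet D)
    (hzero : ∀ x ∉ D, fderiv ℝ f x = 0) :
    ∫ x, ‖fderiv ℝ f x‖ ^ 2 ∂μ ≤ K ^ 2 * μ.real D := by
  have hpoint : ∀ x, ‖fderiv ℝ f x‖ ^ 2 ≤ D.indicator (fun _ => (K : ℝ) ^ 2) x := by
    intro x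
    by_cases hx : x ∈ D
    · rw [Set.indicator_of_mem hx]
      exact pow_le_pow_left₀ (norm_nonneg _) (norm_fderiv_le_of_lipschitz ℝ hf) 2
    · rw [Set.indicator_of_notMem hx, hzero x hx, norm_zero]
      norm_num
  calc ∫ x, ‖fderiv ℝ f x‖ ^ 2 ∂μ ≤ ∫ x, D.indicator (fun _ => (K : ℝ) ^ 2) x ∂μ :=
        integral_mono_of_nonneg (.of_forall fun x => by positivity)
          ((integrable_const _).indicator hD) (.of_forall hpoint)
    _ = K ^ 2 * μ.real D := by rw [integral_indicator_const _ hD, smul_eq_mul, mul_comm]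

lemma le_infDist_of_notMem_cthickening {X : Type*} [PseudoMetricSpace X] {A : Set X}
    (hA : A.Nonempty) {h : ℝ} {x : X} (hx : x ∉ cthickening h A) : h ≤ infDist x A :=
  not_lt.1 fun hlt =>
    hx (thickening_subset_cthickening h A ((mem_thickening_iff_infDist_lt hA).2 hlt))

lemma fderiv_eq_zero_of_forall_mem_Icc {E : Type*} [NormedAddCommGroup E] [NormedSpace ℝ E]
    {f : E → ℝ} {a b : ℝ} (hf : ∀ y, f y ∈ Set.Icc a b) {x : E} (hx : f x = a ∨ f x = b) :
    fderiv ℝ f x = 0 := by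
  rcases hx with hxa | hxb
  · exact IsLocalMin.fderiv_eq_zero (.of_forall fun y => hxa ▸ (hf y).1)
  · exact IsLocalMax.fderiv_eq_zero (.of_forall fun y => hxb ▸ (hf y).2)

lemma SatisfiesPoincareInequality.measureReal_compl_cthickening_le {E : Type*}
    [NormedAddCommGroup E] [NormedSpace ℝ E] [MeasurableSpace E] [OpensMeasurableSpace E]
    {μ : Measure E} [IsProbabilityMeasure μ] {c : ℝ}
    (hP : SatisfiesPoincareInequality μ c) (hc : 0 < c) {A : Set E} (hA : MeasurableSet A)
    (hμA : 1 / 2 ≤ μ.real A) :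
    μ.real (cthickening (2 * c) A)ᶜ ≤ 1 / 3 * μ.real Aᶜ := by
  set h := 2 * c
  set B := cthickening h A
  have hB : MeasurableSet B := isClosed_cthickening.measurableSet
  have hAB : A ⊆ B := self_subset_cthickening A
  have hA_ne : A.Nonempty := Set.nonempty_iff_ne_empty.2 fun h0 => by norm_num [h0] at hμA
  set f : E → ℝ := fun x => min (infDist x A) h
  have hf : LipschitzWith 1 f := (lipschitz_infDist_pt A).min_const h
  have hf_mem : ∀ x, f x ∈ Set.Icc 0 h := fun x =>
    ⟨le_min infDist_nonneg (by positivity), min_le_right _ _⟩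
  have hfA : ∀ x ∈ A, f x = 0 := fun x hx => by
    simp [f, infDist_zero_of_mem hx, h, hc.le]
  have hfB : ∀ x ∈ Bᶜ, f x = h := fun x hx =>
    min_eq_right (le_infDist_of_notMem_cthickening hA_ne hx)
  have hzero : ∀ x ∉ Aᶜ \ Bᶜ, fderiv ℝ f x = 0 := fun x hx =>
    fderiv_eq_zero_of_forall_mem_Icc hf_mem <| (not_and_or.1 hx).imp
      (fun hxA => hfA x (not_not.1 hxA)) (fun hxB => hfB x (not_not.1 hxB))
  have hgrad : ∫ x, ‖fderiv ℝ f x‖ ^ 2 ∂μ ≤ μ.real Aᶜ - μ.real Bᶜ := by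
    have := integral_norm_fderiv_sq_le (μ := μ) hf (hA.compl.diff hB.compl) hzero
    rwa [NNReal.coe_one, one_pow, one_mul,
      measureReal_sdiff (Set.compl_subset_compl.2 hAB) hB.compl] at this
  have hcomplA : μ.real Aᶜ = 1 - μ.real A := by rw [measureReal_compl hA, probReal_univ]
  have hBA : μ.real Bᶜ ≤ μ.real A :=
    (measureReal_mono (Set.compl_subset_compl.2 hAB)).trans (by linarith)
  have hmemLp : MemLp f 2 μ :=
    .of_bound hf.continuous.aestronglyMeasurable h (.of_forall fun x => by
      rw [Real.norm_eq_abs, abs_of_nonneg (hf_mem x).1]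
      exact (hf_mem x).2)
  have hvar := measureReal_mul_sq_add_le_variance hmemLp hA hB.compl
    (Set.disjoint_compl_right_iff_subset.2 hAB) hfA hfB
  -- Since `μ Bᶜ ≤ μ A`, the variance is at least `μ Bᶜ (m² + (h - m)²) ≥ μ Bᶜ h² / 2`.
  have hlower : μ.real Bᶜ * (2 * c ^ 2) ≤ variance f μ := by
    nlinarith [mul_le_mul_of_nonneg_right hBA (sq_nonneg (0 - μ[f])),
      mul_nonneg (measureReal_nonneg (μ := μ) (s := Bᶜ)) (sq_nonneg (2 * μ[f] - h))]
  have hupper := (hP f hf.locallyLipschitz).trans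
    (mul_le_mul_of_nonneg_left hgrad (sq_nonneg c))
  have hc2 : 0 < c ^ 2 := by positivity
  nlinarith

lemma measureReal_compl_cthickening_nat_mul_le {X : Type*} [PseudoMetricSpace X]
    [MeasurableSpace X] [OpensMeasurableSpace X] {ν : Measure X} [IsProbabilityMeasure ν]
    {h q : ℝ} (hh : 0 ≤ h) (hq : 0 ≤ q)
    (hstep : ∀ A : Set X, MeasurableSet A → 1 / 2 ≤ ν.real A →
      ν.real (cthickening h A)ᶜ ≤ q * ν.real Aᶜ)
    {S : Set X} (hS : 1 / 2 ≤ ν.real S) (k : ℕ) :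
    ν.real (cthickening (k * h) S)ᶜ ≤ q ^ k * ν.real Sᶜ := by
  induction k with
  | zero =>
    simpa using measureReal_mono (μ := ν) (Set.compl_subset_compl.2 (subset_closure (s := S)))
  | succ k ih =>
    set A := cthickening (k * h) S
    have hSA : 1 / 2 ≤ ν.real A := hS.trans (measureReal_mono (self_subset_cthickening S))
    have hsub : cthickening h A ⊆ cthickening ((k + 1 : ℕ) * h) S :=
      (cthickening_cthickening_subset hh (by positivity) S).trans
        (cthickening_mono (by push_cast; linarith) S)
    calc ν.real (cthickening ((k + 1 : ℕ) * h) S)ᶜ ≤ ν.real (cthickening h A)ᶜ :=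
          measureReal_mono (Set.compl_subset_compl.2 hsub)
      _ ≤ q * ν.real Aᶜ := hstep A isClosed_cthickening.measurableSet hSA
      _ ≤ q * (q ^ k * ν.real Sᶜ) := mul_le_mul_of_nonneg_left ih hq
      _ = q ^ (k + 1) * ν.real Sᶜ := by ring

lemma half_le_exp_neg_two_thirds : (1 / 2 : ℝ) ≤ Real.exp (-(2 / 3)) := by
  rw [Real.exp_neg, le_inv_comm₀ (by norm_num) (Real.exp_pos _), inv_div, div_one]
  calc Real.exp (2 / 3) ≤ Real.exp (Real.log 2) :=
        Real.exp_le_exp.2 (by linarith [Real.log_two_gt_d9])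
    _ = 2 := Real.exp_log two_pos

lemma one_third_pow_floor_mul_half_le_exp (t : ℝ) :
    (1 / 3 : ℝ) ^ ⌊t⌋₊ * (1 / 2) ≤ Real.exp (-(2 / 3) * t) := by
  set k := ⌊t⌋₊
  calc (1 / 3 : ℝ) ^ k * (1 / 2) ≤ (1 / 2) ^ (k + 1) := by
        rw [pow_succ]
        gcongr
        norm_num
    _ ≤ Real.exp (-(2 / 3)) ^ (k + 1) := by gcongr; exact half_le_exp_neg_two_thirds
    _ = Real.exp (-(2 / 3) * (k + 1)) := by rw [← Real.exp_nat_mul]; push_cast; ring_nf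
    _ ≤ Real.exp (-(2 / 3) * t) := Real.exp_le_exp.2 (by linarith [Nat.lt_floor_add_one t])

/-- Gromov–Milman: if a probability measure `μ` on `ℝⁿ` satisfies a Poincaré inequality
with constant `c_P` (for all locally Lipschitz functions), then its concentration function
satisfies `α_μ(r) ≤ exp(-r/(3 c_P))` for all `r > 0`, i.e. `μ((S_r)ᶜ) ≤ exp(-r/(3 c_P))`
for every measurable `S` with `μ S = 1/2`. -/
theorem gromov_milman_exponential_concentration (n : ℕ)
    (μ : Measure (EuclideanSpace ℝ (Fin n))) [IsProbabilityMeasure μ]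
    (cP : ℝ) (hcP : 0 < cP)
    (hpoincare : ∀ f : EuclideanSpace ℝ (Fin n) → ℝ, LocallyLipschitz f →
      variance f μ ≤ cP ^ 2 * ∫ x, ‖fderiv ℝ f x‖ ^ 2 ∂μ) :
    ∀ S : Set (EuclideanSpace ℝ (Fin n)), MeasurableSet S → μ S = 1 / 2 → ∀ r : ℝ, 0 < r →
      μ (Metric.cthickening r S)ᶜ ≤ ENNReal.ofReal (Real.exp (-r / (3 * cP))) := by
  intro S hS hμS r hr
  have hS_half : μ.real S = 1 / 2 := by simp [measureReal_def, hμS]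
  have hSc_half : μ.real Sᶜ = 1 / 2 := by rw [measureReal_compl hS, probReal_univ]; linarith
  set k := ⌊r / (2 * cP)⌋₊
  have hk : k * (2 * cP) ≤ r := (le_div_iff₀ (by positivity)).1 (Nat.floor_le (by positivity))
  have hgeom := measureReal_compl_cthickening_nat_mul_le (by positivity) (by norm_num)
    (fun A hA hμA => SatisfiesPoincareInequality.measureReal_compl_cthickening_le
      (μ := μ) hpoincare hcP hA hμA) hS_half.ge k
  rw [ENNReal.le_ofReal_iff_toReal_le (measure_ne_top _ _) (Real.exp_nonneg _), ← measureReal_def]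
  calc μ.real (cthickening r S)ᶜ ≤ μ.real (cthickening (k * (2 * cP)) S)ᶜ :=
        measureReal_mono (Set.compl_subset_compl.2 (cthickening_mono hk S))
    _ ≤ (1 / 3) ^ k * (1 / 2) := hSc_half ▸ hgeom
    _ ≤ Real.exp (-(2 / 3) * (r / (2 * cP))) := one_third_pow_floor_mul_half_le_exp _
    _ = Real.exp (-r / (3 * cP)) := by congr 1; field_simp
end
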